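/- Exact recovery in the 2-WSBM with parameters (μ̂ log N, σ̂ √(log N / 2), N, k) with k = o(log N) is achievable whenever γ = μ̂/σ̂ > 2√(1/(k−1)): the densest-k-subgraph estimator equals the planted community with probability 1 − o(1). -/

import Mathlib

/-!
A rival `k`-set `T` with `|T ∩ S| = m` beats the planted `S` only if `W(T) - W(S)`, a Gaussian
with mean `-ℓ μ̂ log N` and variance `ℓ σ̂² log N`, `ℓ = C(k,2) - C(m,2)`, is nonnegative; this has
probability at most `N^(-ℓ γ²/2)`. Because `k` is an integer, `γ² > 4/(k-1)` holds with a uniform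
gap `ε`, and `2ℓ ≥ (k-m)(k-1)` then bounds the probability by `N^(-ε/2) N^(-(k-m))`. At most
`N^(k-m)` rivals share a given intersection with `S`, so the union bound over rivals gives a
failure probability `≤ 2^k N^(-ε/2)`, which is `o(1)` because `k = o(log N)`.
-/

open Real Filter Finset MeasureTheory ProbabilityTheory

/-- Weight of a node set `A` in an `h`-uniform hypergraph: sum of the weights of
all hyperedges (`h`-subsets) inside `A`. -/
noncomputable def Whyp (h : ℕ) {N : ℕ} (E : Finset (Fin N) → ℝ) (A : Finset (Fin N)) : ℝ :=
  ∑ e ∈ A.powersetCard h, E e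

/-- Probability, in the 2-community WSBM on the complete `h`-uniform hypergraph on `N`
nodes with planted community `S` and parameters `(μ̂ log N, σ̂ √(log N/2))`, that the
planted community is the unique densest `|S|`-sub-hypergraph (success of the ML
estimator). -/
noncomputable def hwsbmSuccess (μHat σHat : ℝ) (h : ℕ) {N : ℕ} (S : Finset (Fin N)) : ℝ :=
  ((Measure.pi fun e : Finset (Fin N) =>
      ProbabilityTheory.gaussianReal (if e.card = h ∧ e ⊆ S then μHat * Real.log N else 0)
        (Real.toNNReal (σHat ^ 2 * Real.log N / 2)))
    {E : Finset (Fin N) → ℝ | ∀ S' : Finset (Fin N),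
      S'.card = S.card → S' ≠ S → Whyp h E S' < Whyp h E S}).toReal

open scoped NNReal

lemma hasSubgaussianMGF_sub_gaussianReal (m : ℝ) (v : ℝ≥0) :
    HasSubgaussianMGF (fun x => x - m) v (gaussianReal m v) := by
  have hmap : (gaussianReal m v).map (fun x => x - m) = gaussianReal 0 v := by
    simpa using gaussianReal_map_sub_const (μ := m) (v := v) m
  refine (HasSubgaussianMGF.id_map_iff (by fun_prop)).1 ⟨fun t => ?_, fun t => ?_⟩
  · rw [hmap]; exact integrable_exp_mul_gaussianReal t
  · rw [hmap, mgf_id_gaussianReal]; simp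

lemma measureReal_pi_gaussianReal_sum_mul_nonneg_le {ι : Type*} [Fintype ι]
    (m : ι → ℝ) (v : ℝ≥0) (c : ι → ℝ) (hneg : ∑ i, c i * m i ≤ 0) :
    (Measure.pi fun i => gaussianReal (m i) v).real {ω | 0 ≤ ∑ i, c i * ω i}
      ≤ exp (-(∑ i, c i * m i) ^ 2 / (2 * ((∑ i, c i ^ 2) * v))) := by
  set P := Measure.pi fun i => gaussianReal (m i) v
  have hind : iIndepFun (fun i ω => c i * (ω i - m i)) P :=
    iIndepFun_pi (X := fun i x => c i * (x - m i)) fun i => by fun_prop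
  have hsub : ∀ i ∈ (univ : Finset ι), HasSubgaussianMGF (fun ω => c i * (ω i - m i))
      (⟨c i ^ 2, sq_nonneg _⟩ * v) P := fun i _ => by
    refine HasSubgaussianMGF.const_mul ?_ (c i)
    refine HasSubgaussianMGF.of_map (Y := fun ω : ι → ℝ => ω i) (X := fun x => x - m i)
      (measurable_pi_apply i).aemeasurable ?_
    rw [(measurePreserving_eval _ i).map_eq]
    exact hasSubgaussianMGF_sub_gaussianReal _ _
  have h := HasSubgaussianMGF.measure_sum_ge_le_of_iIndepFun hind hsub (neg_nonneg.2 hneg)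
  convert h using 2
  · ext ω
    simp only [Set.mem_ofPred_eq, mul_sub, sum_sub_distrib]
    constructor <;> intro h <;> linarith
  · rw [neg_sq, NNReal.coe_sum, sum_mul]
    rfl

namespace Finset

variable {α : Type*} [DecidableEq α]

lemma powersetCard_inter (n : ℕ) (s t : Finset α) :
    powersetCard n (s ∩ t) = powersetCard n s ∩ powersetCard n t := by
  ext e
  simp only [mem_inter, mem_powersetCard, subset_inter_iff]
  tauto

variable [Fintype α]

lemma sum_ite_sub_ite_mul (A B : Finset α) (f : α → ℝ) :
    ∑ e, ((if e ∈ A then 1 else 0) - (if e ∈ B then 1 else 0)) * f e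
      = ∑ e ∈ A, f e - ∑ e ∈ B, f e := by
  simp only [sub_mul, ite_mul, one_mul, zero_mul, sum_sub_distrib, sum_ite_mem, univ_inter]

lemma sum_ite_sub_ite_sq (A B : Finset α) :
    ∑ e, ((if e ∈ A then (1 : ℝ) else 0) - (if e ∈ B then 1 else 0)) ^ 2
      = (#A : ℝ) + #B - 2 * #(A ∩ B) := by
  have hpt : ∀ e, ((if e ∈ A then (1 : ℝ) else 0) - (if e ∈ B then 1 else 0)) ^ 2
      = (if e ∈ A then 1 else 0) + (if e ∈ B then 1 else 0) - 2 * (if e ∈ A ∩ B then 1 else 0) := by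
    intro e
    by_cases hA : e ∈ A <;> by_cases hB : e ∈ B <;> norm_num [hA, hB]
  simp only [hpt, sum_sub_distrib, sum_add_distrib, ← mul_sum, sum_ite_mem, univ_inter,
    sum_const, nsmul_eq_mul, mul_one]

lemma card_filter_inter_eq_le (n : ℕ) (S A : Finset α) :
    #{T ∈ univ.powersetCard n | S ∩ T = A} ≤ Fintype.card α ^ (n - #A) := by
  calc #{T ∈ univ.powersetCard n | S ∩ T = A}
      ≤ #(univ.powersetCard (n - #A) : Finset (Finset α)) := by
        refine card_le_card_of_injOn (· \ S) (fun T hT => ?_) (fun T₁ hT₁ T₂ hT₂ heq => ?_)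
        · simp only [coe_filter, mem_powersetCard, subset_univ, true_and] at hT
          simp [card_sdiff, hT.1, hT.2]
        · simp only [coe_filter, Set.mem_ofPred_eq] at hT₁ hT₂
          rw [← sdiff_union_inter T₁ S, ← sdiff_union_inter T₂ S, inter_comm T₁, inter_comm T₂,
            hT₁.2, hT₂.2]
          exact congrArg (· ∪ A) heq
    _ ≤ Fintype.card α ^ (n - #A) := by
        rw [card_powersetCard, card_univ]
        exact Nat.choose_le_pow _ _

/-- Grouping the sets `T` by `S ∩ T`, each group contributes at most one. -/
lemma sum_inv_pow_card_sdiff_le (n : ℕ) (S : Finset α) :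
    ∑ T ∈ univ.powersetCard n, ((Fintype.card α : ℝ) ^ #(T \ S))⁻¹ ≤ 2 ^ #S := by
  rw [← sum_fiberwise_of_maps_to (g := (S ∩ ·)) (t := S.powerset)
    fun T _ => mem_powerset.2 inter_subset_left]
  calc ∑ A ∈ S.powerset, ∑ T ∈ univ.powersetCard n with S ∩ T = A,
        ((Fintype.card α : ℝ) ^ #(T \ S))⁻¹
      ≤ ∑ A ∈ S.powerset, (1 : ℝ) := by
        refine sum_le_sum fun A _ => ?_
        calc ∑ T ∈ univ.powersetCard n with S ∩ T = A, ((Fintype.card α : ℝ) ^ #(T \ S))⁻¹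
            = ∑ T ∈ univ.powersetCard n with S ∩ T = A, ((Fintype.card α : ℝ) ^ (n - #A))⁻¹ :=
              sum_congr rfl fun T hT => by
                rw [mem_filter, mem_powersetCard] at hT
                rw [card_sdiff, hT.1.2, hT.2]
          _ = #{T ∈ univ.powersetCard n | S ∩ T = A} / (Fintype.card α : ℝ) ^ (n - #A) := by
              rw [sum_const, nsmul_eq_mul, div_eq_mul_inv]
          _ ≤ 1 := div_le_one_of_le₀ (mod_cast card_filter_inter_eq_le n S A) (by positivity)
    _ = 2 ^ #S := by simp

end Finset

lemma sub_add_half_le_choose_two_sub_mul {k m : ℕ} (hk : 2 ≤ k) (hmk : m < k) {ε g : ℝ}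
    (hε : 0 ≤ ε) (hg : 4 / ((k : ℝ) - 1) + ε ≤ g) :
    ((k : ℝ) - m) + ε / 2 ≤ ((k.choose 2 : ℝ) - m.choose 2) * g / 2 := by
  rw [Nat.cast_choose_two, Nat.cast_choose_two]
  have hk2 : (2 : ℝ) ≤ k := by exact_mod_cast hk
  have hmk' : (m : ℝ) + 1 ≤ k := by exact_mod_cast hmk
  have hm0 : (0 : ℝ) ≤ m := m.cast_nonneg
  set ℓ : ℝ := (k : ℝ) * (k - 1) / 2 - m * (m - 1) / 2 with hℓdef
  have hℓ : 2 * ℓ = ((k : ℝ) - m) * (k + m - 1) := by rw [hℓdef]; ring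
  have hℓ1 : 1 ≤ ℓ := by
    nlinarith [mul_nonneg (by linarith : (0 : ℝ) ≤ k - m - 1) (by linarith : (0 : ℝ) ≤ k + m - 2)]
  have hℓj : ((k : ℝ) - m) * (k - 1) ≤ 2 * ℓ := by
    nlinarith [mul_nonneg (by linarith : (0 : ℝ) ≤ k - m) hm0]
  have hfrac : (k : ℝ) - m ≤ 2 * ℓ / (k - 1) := by rw [le_div_iff₀ (by linarith)]; exact hℓj
  calc ((k : ℝ) - m) + ε / 2 ≤ 2 * ℓ / (k - 1) + ℓ * ε / 2 := by nlinarith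
    _ = ℓ * (4 / ((k : ℝ) - 1) + ε) / 2 := by field_simp; ring
    _ ≤ ℓ * g / 2 := by gcongr

lemma exists_pos_forall_div_sub_one_add_le {a c : ℝ} (ha : 0 ≤ a) (hc : 0 < c) :
    ∃ ε > 0, ∀ n : ℕ, 2 ≤ n → a / ((n : ℝ) - 1) < c → a / ((n : ℝ) - 1) + ε ≤ c := by
  classical
  have hex : ∃ n : ℕ, 2 ≤ n ∧ a / ((n : ℝ) - 1) < c := by
    obtain ⟨n, hn⟩ := exists_nat_gt (a / c + 1)
    have h1 : (1 : ℝ) < n := by linarith [div_nonneg ha hc.le]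
    refine ⟨n, by exact_mod_cast h1, ?_⟩
    rw [div_lt_iff₀ (by linarith), mul_comm, ← div_lt_iff₀ hc]
    linarith
  obtain ⟨hn₀, hlt₀⟩ := Nat.find_spec hex
  refine ⟨c - a / ((Nat.find hex : ℝ) - 1), sub_pos.2 hlt₀, fun n hn hlt => ?_⟩
  have hmin : (Nat.find hex : ℝ) ≤ n := by exact_mod_cast Nat.find_min' hex ⟨hn, hlt⟩
  have hn₀' : (2 : ℝ) ≤ Nat.find hex := by exact_mod_cast hn₀
  have := div_le_div_of_nonneg_left (b := (n : ℝ) - 1) (c := (Nat.find hex : ℝ) - 1) ha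
    (by linarith) (by linarith)
  linarith

lemma tendsto_two_pow_mul_exp_neg_mul_log {k : ℕ → ℕ}
    (hk : Tendsto (fun N : ℕ => (k N : ℝ) / log N) atTop (nhds 0)) {ε : ℝ} (hε : 0 < ε) :
    Tendsto (fun N : ℕ => 2 ^ k N * exp (-ε * log N)) atTop (nhds 0) := by
  have hlog : Tendsto (fun N : ℕ => log N) atTop atTop :=
    tendsto_log_atTop.comp tendsto_natCast_atTop_atTop
  have hcoef : Tendsto (fun N : ℕ => (k N : ℝ) / log N * log 2 - ε) atTop (nhds (-ε)) := by
    simpa using (hk.mul_const (log 2)).sub_const ε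
  refine (tendsto_exp_atBot.comp (hlog.atTop_mul_neg (neg_neg_of_pos hε) hcoef)).congr' ?_
  filter_upwards [eventually_ge_atTop 2] with N hN
  have hL : log N ≠ 0 := (log_pos (by exact_mod_cast hN)).ne'
  rw [Function.comp_apply, ← rpow_natCast, rpow_def_of_pos two_pos, ← exp_add]
  congr 1
  field_simp
  ring

noncomputable def wsbmLaw (μHat σHat : ℝ) (h : ℕ) {N : ℕ} (S : Finset (Fin N)) :
    Measure (Finset (Fin N) → ℝ) :=
  Measure.pi fun e : Finset (Fin N) =>
    gaussianReal (if e.card = h ∧ e ⊆ S then μHat * log N else 0)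
      (Real.toNNReal (σHat ^ 2 * log N / 2))

instance {μHat σHat : ℝ} {h N : ℕ} {S : Finset (Fin N)} :
    IsProbabilityMeasure (wsbmLaw μHat σHat h S) := by
  rw [wsbmLaw]; infer_instance

lemma wsbmLaw_real_weight_le_weight_le {μHat σHat : ℝ} (hμ : 0 ≤ μHat) (h : ℕ) {N : ℕ}
    {S T : Finset (Fin N)} (hT : #T = #S) :
    (wsbmLaw μHat σHat h S).real {E | Whyp h E S ≤ Whyp h E T}
      ≤ exp (-(((#S).choose h - (#(T ∩ S)).choose h : ℝ) * (μHat / σHat) ^ 2 / 2 * log N)) := by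
  rw [wsbmLaw]
  set L := log N
  set A := T.powersetCard h
  set B := S.powersetCard h
  set c : Finset (Fin N) → ℝ := fun e => (if e ∈ A then 1 else 0) - (if e ∈ B then 1 else 0)
  set d : ℝ := (#S).choose h - (#(T ∩ S)).choose h
  have hL : 0 ≤ L := log_natCast_nonneg N
  have hmean : ∀ e : Finset (Fin N), (#e = h ∧ e ⊆ S) ↔ e ∈ B := fun e => by
    rw [mem_powersetCard, and_comm]
  have hAB : #(A ∩ B) = (#(T ∩ S)).choose h := by rw [← powersetCard_inter, card_powersetCard]
  have hset : {E : Finset (Fin N) → ℝ | Whyp h E S ≤ Whyp h E T}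
      = {E | 0 ≤ ∑ e, c e * E e} := by
    ext E
    simp only [Set.mem_ofPred_eq, c, sum_ite_sub_ite_mul, Whyp, sub_nonneg, A, B]
  have hdrift : ∑ e, c e * (if e ∈ B then μHat * L else 0) = -d * (μHat * L) := by
    simp only [c, sum_ite_sub_ite_mul, sum_ite_mem, sum_const, nsmul_eq_mul, d, hAB, inter_self,
      B, card_powersetCard]
    ring
  have hvar : ∑ e, c e ^ 2 = 2 * d := by
    simp only [c, sum_ite_sub_ite_sq, hAB, A, B, card_powersetCard, hT, d]
    ring
  have hd : 0 ≤ d := sub_nonneg.2 (mod_cast Nat.choose_le_choose h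
    (card_le_card inter_subset_right))
  have hv : (Real.toNNReal (σHat ^ 2 * L / 2) : ℝ) = σHat ^ 2 * L / 2 :=
    Real.coe_toNNReal _ (by positivity)
  simp only [hmean]
  rw [hset]
  refine (measureReal_pi_gaussianReal_sum_mul_nonneg_le _ _ c ?_).trans_eq ?_
  · rw [hdrift]
    have := mul_nonneg hd (mul_nonneg hμ hL)
    linarith
  · rw [hdrift, hvar, hv]
    congr 1
    -- if `d`, `L` or `σHat` vanishes, both sides are `0` by the convention `x / 0 = 0`
    rcases eq_or_ne d 0 with hd0 | hd0
    · simp [hd0]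
    rcases eq_or_ne L 0 with hL0 | hL0
    · simp [hL0]
    rcases eq_or_ne σHat 0 with hσ0 | hσ0
    · simp [hσ0]
    field_simp

lemma wsbmLaw_real_weight_le_weight_le_of_ne {μHat σHat : ℝ} (hμ : 0 ≤ μHat) {N : ℕ}
    {S T : Finset (Fin N)} (hS : 2 ≤ #S) (hT : #T = #S) (hTS : T ≠ S) {ε : ℝ} (hε : 0 ≤ ε)
    (hγ : 4 / ((#S : ℝ) - 1) + ε ≤ (μHat / σHat) ^ 2) :
    (wsbmLaw μHat σHat 2 S).real {E | Whyp 2 E S ≤ Whyp 2 E T}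
      ≤ exp (-(ε / 2) * log N) * ((N : ℝ) ^ #(T \ S))⁻¹ := by
  have hN : 0 < N := by
    have := card_le_univ S
    rw [Fintype.card_fin] at this
    omega
  have hsplit := card_inter_add_card_sdiff T S
  have hsdiff : 0 < #(T \ S) :=
    card_pos.2 (sdiff_nonempty.2 fun hsub => hTS (eq_of_subset_of_card_le hsub hT.ge))
  have hlt : #(T ∩ S) < #S := by omega
  have hj : (#(T \ S) : ℝ) = #S - #(T ∩ S) := by
    rw [eq_sub_iff_add_eq, add_comm, ← hT]; exact_mod_cast hsplit
  have hexp := sub_add_half_le_choose_two_sub_mul hS hlt hε hγ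
  refine (wsbmLaw_real_weight_le_weight_le hμ 2 hT).trans ?_
  rw [← exp_log (by positivity : (0 : ℝ) < (N : ℝ) ^ #(T \ S)), ← exp_neg, ← exp_add, log_pow]
  gcongr
  rw [hj]
  nlinarith [mul_le_mul_of_nonneg_right hexp (log_natCast_nonneg N)]

lemma one_sub_two_pow_mul_exp_le_hwsbmSuccess {μHat σHat : ℝ} (hμ : 0 ≤ μHat) {N : ℕ}
    (S : Finset (Fin N)) (hS : 2 ≤ #S) {ε : ℝ} (hε : 0 ≤ ε)
    (hγ : 4 / ((#S : ℝ) - 1) + ε ≤ (μHat / σHat) ^ 2) :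
    1 - 2 ^ #S * exp (-(ε / 2) * log N) ≤ hwsbmSuccess μHat σHat 2 S := by
  set P := wsbmLaw μHat σHat 2 S
  set G := {E : Finset (Fin N) → ℝ |
    ∀ T : Finset (Fin N), #T = #S → T ≠ S → Whyp 2 E T < Whyp 2 E S}
  set rivals := (univ.powersetCard #S).erase S
  have hfail : Gᶜ ⊆ ⋃ T ∈ rivals, {E | Whyp 2 E S ≤ Whyp 2 E T} := by
    intro E hE
    simp only [G, Set.mem_compl_iff, Set.mem_ofPred_eq, not_forall, not_lt] at hE
    obtain ⟨T, hT, hTS, hle⟩ := hE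
    exact Set.mem_biUnion (mem_erase.2 ⟨hTS, mem_powersetCard.2 ⟨subset_univ _, hT⟩⟩) hle
  have hunion : P.real Gᶜ ≤ exp (-(ε / 2) * log N) * 2 ^ #S :=
    calc P.real Gᶜ ≤ ∑ T ∈ rivals, P.real {E | Whyp 2 E S ≤ Whyp 2 E T} :=
          (measureReal_mono hfail (measure_ne_top _ _)).trans (measureReal_biUnion_finset_le _ _)
      _ ≤ ∑ T ∈ rivals, exp (-(ε / 2) * log N) * ((N : ℝ) ^ #(T \ S))⁻¹ :=
          sum_le_sum fun T hT => by
            obtain ⟨hTS, hT⟩ := mem_erase.1 hT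
            exact wsbmLaw_real_weight_le_weight_le_of_ne hμ hS (mem_powersetCard.1 hT).2 hTS hε hγ
      _ ≤ ∑ T ∈ univ.powersetCard #S, exp (-(ε / 2) * log N) * ((N : ℝ) ^ #(T \ S))⁻¹ :=
          sum_le_sum_of_subset_of_nonneg (erase_subset _ _) fun _ _ _ => by positivity
      _ ≤ exp (-(ε / 2) * log N) * 2 ^ #S := by
          rw [← mul_sum]
          gcongr
          simpa using sum_inv_pow_card_sdiff_le #S S
  have hcover : 1 ≤ P.real G + P.real Gᶜ := by
    simpa [probReal_univ] using measureReal_union_le (μ := P) G Gᶜ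
  show _ ≤ P.real G
  linarith

theorem stmt18_general (μHat σHat : ℝ) (hμ : 0 < μHat) (hσ : 0 < σHat)
    (k : ℕ → ℕ) (hk2 : ∀ N, 2 ≤ N → 2 ≤ k N)
    (hko : Tendsto (fun N : ℕ => (k N : ℝ) / Real.log N) atTop (nhds 0))
    (S : ∀ N : ℕ, Finset (Fin N)) (hScard : ∀ N, 2 ≤ N → (S N).card = k N)
    (hγ : ∀ N, 2 ≤ N → 2 * Real.sqrt (1 / ((k N : ℝ) - 1)) < μHat / σHat) :
    Tendsto (fun N : ℕ => hwsbmSuccess μHat σHat 2 (S N)) atTop (nhds 1) := by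
  have hγsq : ∀ N, 2 ≤ N → 4 / ((k N : ℝ) - 1) < (μHat / σHat) ^ 2 := fun N hN => by
    have hk : (2 : ℝ) ≤ k N := by exact_mod_cast hk2 N hN
    calc 4 / ((k N : ℝ) - 1) = (2 * √(1 / ((k N : ℝ) - 1))) ^ 2 := by
          rw [mul_pow, sq_sqrt (one_div_nonneg.2 (by linarith))]; ring
      _ < (μHat / σHat) ^ 2 := pow_lt_pow_left₀ (hγ N hN) (by positivity) two_ne_zero
  obtain ⟨ε, hε, hεγ⟩ := exists_pos_forall_div_sub_one_add_le (a := 4) (c := (μHat / σHat) ^ 2)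
    (by norm_num) (by positivity)
  have hbound : ∀ᶠ N in atTop,
      1 - 2 ^ k N * exp (-(ε / 2) * log N) ≤ hwsbmSuccess μHat σHat 2 (S N) := by
    filter_upwards [eventually_ge_atTop 2] with N hN
    have hkN := hk2 N hN
    have hεγN := hεγ _ hkN (hγsq N hN)
    rw [← hScard N hN] at hkN hεγN ⊢
    exact one_sub_two_pow_mul_exp_le_hwsbmSuccess hμ.le (S N) hkN hε.le hεγN
  refine tendsto_of_tendsto_of_tendsto_of_le_of_le' ?_ tendsto_const_nhds hbound
    (.of_forall fun N => measureReal_le_one (μ := wsbmLaw μHat σHat 2 (S N)))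
  simpa using (tendsto_two_pow_mul_exp_neg_mul_log hko (half_pos hε)).const_sub 1

/-- exact recovery in the 2-WSBM with parameters
`(μ̂ log N, σ̂ √(log N/2), N, k)` and `k = o(log N)` is achievable whenever
`γ = μ̂/σ̂ > 2√(1/(k−1))`: the densest-`k`-subgraph estimator equals the planted
community with probability `1 − o(1)`. -/
theorem stmt18 (μHat σHat : ℝ) (hμ : 0 < μHat) (hσ : 0 < σHat)
    (k : ℕ → ℕ) (hk2 : ∀ N, 2 ≤ N → 2 ≤ k N) (hkN : ∀ N, 2 ≤ N → k N ≤ N)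
    (hko : Tendsto (fun N : ℕ => (k N : ℝ) / Real.log N) atTop (nhds 0))
    (S : ∀ N : ℕ, Finset (Fin N)) (hScard : ∀ N, 2 ≤ N → (S N).card = k N)
    (hγ : ∀ N, 2 ≤ N → 2 * Real.sqrt (1 / ((k N : ℝ) - 1)) < μHat / σHat) :
    Tendsto (fun N : ℕ => hwsbmSuccess μHat σHat 2 (S N)) atTop (nhds 1) :=
  stmt18_general μHat σHat hμ hσ k hk2 hko S hScard hγ
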